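/- Let (D, φ, N) be an E-(φ,N)-module over A equipped with a refinement 𝓕 of length n. Let D* = Hom_A(D, A) be the dual A-module, let N_{D*} : D* → D* be the negative transpose of N, i.e. N_{D*}(y) = −(y ∘ N), and for 0 ≤ i ≤ n let 𝓕̌ᵢ = { y ∈ D* : y(x) = 0 for all x ∈ 𝓕_{n−i} } be the dual refinement (each 𝓕̌ᵢ is automatically stable under N_{D*}). Then for all s, t ∈ {1,…,n}, the pair (s,t) is a marked pair for (N, 𝓕) if and only if (n+1−t, n+1−s) is a marked pair for (N_{D*}, 𝓕̌); here a pair (s',t') is called a marked pair for a monodromy operator N' and a chain 𝓕' if N'(𝓕'_{t'−1}) is strictly contained in N'(𝓕'_{t'}) and s' is the least index j ∈ {1,…,n} such that N'(𝓕'_{t'}) ⊆ N'(𝓕'_{t'−1}) + 𝓕'_j. -/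

import Mathlib

set_option maxHeartbeats 1600000
set_option linter.unusedSectionVars false
set_option linter.unusedVariables false
set_option linter.unusedSectionVars false

section Duality

variable {R : Type*} [CommRing R] {M : Type*} [AddCommGroup M] [Module R M]
  [Module.Free R M] [Module.Finite R M] [ComplementedLattice (Submodule R M)]

/-- relative complements -/
lemma aux_relCompl (W Z : Submodule R M) (h : W ≤ Z) :
    ∃ U : Submodule R M, W ⊔ U = Z ∧ U ⊓ W = ⊥ := by
  obtain ⟨W', hc⟩ := exists_isCompl W
  refine ⟨W' ⊓ Z, ?_, ?_⟩
  · rw [← sup_inf_assoc_of_le _ h, hc.sup_eq_top, top_inf_eq]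
  · rw [inf_comm W' Z, inf_assoc, hc.symm.inf_eq_bot, inf_bot_eq]

lemma aux_sep (U : Submodule R M) (x : M) (hx : x ∉ U) :
    ∃ y : Module.Dual R M, y ∈ U.dualAnnihilator ∧ y x ≠ 0 := by
  obtain ⟨U', hc⟩ := exists_isCompl U
  set π := U'.projectionOnto U hc.symm with hπ
  have hπx : (π x : M) ≠ 0 := by
    intro h0
    apply hx
    have : π x = 0 := Subtype.ext h0
    rwa [hπ, Submodule.linearProjOfIsCompl_apply_eq_zero_iff] at this
  let b := Module.Free.chooseBasis R M
  have hrep : b.repr (π x : M) ≠ 0 := fun h =>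
    hπx (by simpa using congrArg b.repr.symm h)
  obtain ⟨i, hi⟩ : ∃ i, b.repr (π x : M) i ≠ 0 := by
    by_contra hall
    push_neg at hall
    exact hrep (Finsupp.ext hall)
  refine ⟨(b.coord i).comp (U'.subtype.comp π), ?_, ?_⟩
  · rw [Submodule.mem_dualAnnihilator]
    intro w hw
    simp [hπ, Submodule.linearProjOfIsCompl_apply_right' hc.symm hw]
  · simpa [Module.Basis.coord_apply] using hi

lemma aux_dualAnn_le_iff (U V : Submodule R M) :
    U.dualAnnihilator ≤ V.dualAnnihilator ↔ V ≤ U := by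
  constructor
  · intro h x hxV
    by_contra hxU
    obtain ⟨y, hy, hyx⟩ := aux_sep U x hxU
    exact hyx ((Submodule.mem_dualAnnihilator _).1 (h hy) x hxV)
  · exact fun h => Submodule.dualAnnihilator_anti h

lemma aux_dualAnn_lt_iff (U V : Submodule R M) :
    U.dualAnnihilator < V.dualAnnihilator ↔ V < U := by
  rw [lt_iff_le_not_ge, lt_iff_le_not_ge, aux_dualAnn_le_iff, aux_dualAnn_le_iff]

lemma aux_dualAnn_le_sup_iff (X Y Z : Submodule R M) :
    X.dualAnnihilator ≤ Y.dualAnnihilator ⊔ Z.dualAnnihilator ↔ Y ⊓ Z ≤ X := by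
  constructor
  · intro h x hx
    by_contra hxX
    obtain ⟨ξ, hξ, hξx⟩ := aux_sep X x hxX
    obtain ⟨η, hη, ζ, hζ, rfl⟩ := Submodule.mem_sup.1 (h hξ)
    have h1 : η x = 0 := (Submodule.mem_dualAnnihilator _).1 hη x hx.1
    have h2 : ζ x = 0 := (Submodule.mem_dualAnnihilator _).1 hζ x hx.2
    apply hξx
    simp [h1, h2]
  · intro h ξ hξ
    have hξW : ∀ w ∈ Y ⊓ Z, ξ w = 0 := fun w hw =>
      (Submodule.mem_dualAnnihilator _).1 hξ w (h hw)
    -- build decomposition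
    obtain ⟨U, hUZ, hUW⟩ := aux_relCompl (Y ⊓ Z) Z inf_le_right
    have hYU : Y ⊓ U = ⊥ := by
      rw [← le_bot_iff, ← hUW]
      intro x hx
      have hx1 : x ∈ Y := (Submodule.mem_inf.1 hx).1
      have hx2 : x ∈ U := (Submodule.mem_inf.1 hx).2
      have hxZ : x ∈ Z := hUZ ▸ Submodule.mem_sup_right hx2
      exact Submodule.mem_inf.2 ⟨hx2, Submodule.mem_inf.2 ⟨hx1, hxZ⟩⟩
    obtain ⟨V, hVc⟩ := exists_isCompl (Y ⊔ U)
    have hcompl : IsCompl Y (U ⊔ V) := by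
      constructor
      · rw [disjoint_iff]
        rw [← le_bot_iff]
        intro x hx
        obtain ⟨hxY, hxUV⟩ := hx
        obtain ⟨u, hu, v, hv, rfl⟩ := Submodule.mem_sup.1 hxUV
        have hvmem : v ∈ (Y ⊔ U) ⊓ V :=
          Submodule.mem_inf.2 ⟨by
            have : v = (u + v) - u := by abel
            rw [this]
            exact Submodule.sub_mem _ (Submodule.mem_sup_left hxY) (Submodule.mem_sup_right hu), hv⟩
        rw [hVc.inf_eq_bot] at hvmem
        rw [Submodule.mem_bot] at hvmem
        subst hvmem
        have : u + 0 ∈ Y ⊓ U := Submodule.mem_inf.2 ⟨by simpa using hxY, by simpa using hu⟩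
        rw [hYU] at this
        simpa using this
      · rw [codisjoint_iff, ← sup_assoc, hVc.sup_eq_top]
    set πY := Submodule.projectionOnto Y (U ⊔ V) hcompl
    refine Submodule.mem_sup.2 ⟨ξ - ξ.comp (Y.subtype.comp πY), ?_, ξ.comp (Y.subtype.comp πY), ?_, by abel⟩
    · rw [Submodule.mem_dualAnnihilator]
      intro w hw
      simp [πY, Submodule.projectionOnto_apply_of_mem_left hcompl hw]
    · rw [Submodule.mem_dualAnnihilator]
      intro z hz
      rw [← hUZ] at hz
      obtain ⟨w, hw, u, hu, rfl⟩ := Submodule.mem_sup.1 hz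
      have hwY : w ∈ Y := (Submodule.mem_inf.1 hw).1
      have h1 : πY w = ⟨w, hwY⟩ :=
        Submodule.linearProjOfIsCompl_apply_left hcompl ⟨w, hwY⟩
      have h2 : πY u = 0 :=
        Submodule.linearProjOfIsCompl_apply_right' hcompl (Submodule.mem_sup_left hu)
      simp only [LinearMap.comp_apply, map_add, h1, h2]
      simpa using hξW w hw

end Duality

section Duality2

variable {R : Type*} [CommRing R] {M : Type*} [AddCommGroup M] [Module R M]
  [Module.Free R M] [Module.Finite R M] [ComplementedLattice (Submodule R M)]

lemma aux_compl_assemble (R0 C V : Submodule R M) (hRC : R0 ⊓ C = ⊥)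
    (hV : IsCompl (R0 ⊔ C) V) : IsCompl R0 (C ⊔ V) := by
  constructor
  · rw [disjoint_iff, ← le_bot_iff]
    intro x hx
    have hxR : x ∈ R0 := (Submodule.mem_inf.1 hx).1
    obtain ⟨c, hc, v, hv, rfl⟩ := Submodule.mem_sup.1 (Submodule.mem_inf.1 hx).2
    have hvmem : v ∈ (R0 ⊔ C) ⊓ V := Submodule.mem_inf.2 ⟨by
      have : v = (c + v) - c := by abel
      rw [this]
      exact Submodule.sub_mem _ (Submodule.mem_sup_left hxR) (Submodule.mem_sup_right hc), hv⟩
    rw [hV.inf_eq_bot, Submodule.mem_bot] at hvmem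
    subst hvmem
    have : c + 0 ∈ R0 ⊓ C := Submodule.mem_inf.2 ⟨by simpa using hxR, by simpa using hc⟩
    rw [hRC] at this
    simpa using this
  · rw [codisjoint_iff, ← sup_assoc, hV.sup_eq_top]

lemma aux_map_dualMap (Nl : M →ₗ[R] M) (F : Submodule R M) :
    Submodule.map Nl.dualMap F.dualAnnihilator = (F.comap Nl).dualAnnihilator := by
  apply le_antisymm
  · rintro _ ⟨y, hy, rfl⟩
    rw [Submodule.mem_dualAnnihilator]
    intro x hx
    exact (Submodule.mem_dualAnnihilator _).1 hy _ (Submodule.mem_comap.1 hx)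
  · intro z hz
    have hzval : ∀ x : M, Nl x ∈ F → z x = 0 := fun x hx =>
      (Submodule.mem_dualAnnihilator _).1 hz x (Submodule.mem_comap.2 hx)
    obtain ⟨K', hK'⟩ := exists_isCompl (LinearMap.ker Nl)
    set R0 := LinearMap.range Nl with hR0
    let fKR : K' →ₗ[R] R0 :=
      (Nl.comp K'.subtype).codRestrict R0 (fun x => LinearMap.mem_range_self _ _)
    have hinj : Function.Injective fKR := by
      intro a b hab
      have h0 : Nl ((a : M) - b) = 0 := by
        have hv : Nl (a : M) = Nl (b : M) := congrArg (Subtype.val) hab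
        rw [map_sub, hv, sub_self]
      have : ((a : M) - b) ∈ LinearMap.ker Nl ⊓ K' :=
        Submodule.mem_inf.2 ⟨h0, Submodule.sub_mem _ a.2 b.2⟩
      rw [hK'.inf_eq_bot, Submodule.mem_bot, sub_eq_zero] at this
      exact Subtype.ext this
    have hsurj : Function.Surjective fKR := by
      rintro ⟨-, x, rfl⟩
      have hx : x ∈ LinearMap.ker Nl ⊔ K' := by rw [hK'.sup_eq_top]; trivial
      obtain ⟨k, hk, k', hk', rfl⟩ := Submodule.mem_sup.1 hx
      refine ⟨⟨k', hk'⟩, Subtype.ext ?_⟩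
      simp only [fKR, LinearMap.codRestrict_apply, LinearMap.comp_apply,
        Submodule.subtype_apply]
      rw [map_add, LinearMap.mem_ker.1 hk, zero_add]
    let e : K' ≃ₗ[R] R0 := LinearEquiv.ofBijective fKR ⟨hinj, hsurj⟩
    have hNe : ∀ r : R0, Nl ((e.symm r : K') : M) = (r : M) := by
      intro r
      exact congrArg Subtype.val (e.apply_symm_apply r)
    obtain ⟨C, hWC, hCW⟩ := aux_relCompl (R0 ⊓ F) F inf_le_right
    have hRC : R0 ⊓ C = ⊥ := by
      rw [← le_bot_iff, ← hCW]
      intro x hx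
      have hx1 : x ∈ R0 := (Submodule.mem_inf.1 hx).1
      have hx2 : x ∈ C := (Submodule.mem_inf.1 hx).2
      have hxF : x ∈ F := hWC ▸ Submodule.mem_sup_right hx2
      exact Submodule.mem_inf.2 ⟨hx2, Submodule.mem_inf.2 ⟨hx1, hxF⟩⟩
    obtain ⟨V, hV⟩ := exists_isCompl (R0 ⊔ C)
    have hcompl : IsCompl R0 (C ⊔ V) := aux_compl_assemble R0 C V hRC hV
    set πR := Submodule.projectionOnto R0 (C ⊔ V) hcompl
    set y : Module.Dual R M := z.comp (K'.subtype.comp ((e.symm : R0 →ₗ[R] K').comp πR))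
    refine ⟨y, ?_, ?_⟩
    · simp only [SetLike.mem_coe, Submodule.mem_dualAnnihilator]
      intro x hxF
      rw [← hWC] at hxF
      obtain ⟨w, hw, c, hc, rfl⟩ := Submodule.mem_sup.1 hxF
      have hwR : w ∈ R0 := (Submodule.mem_inf.1 hw).1
      have h1 : πR w = ⟨w, hwR⟩ :=
        Submodule.linearProjOfIsCompl_apply_left hcompl ⟨w, hwR⟩
      have h2 : πR c = 0 :=
        Submodule.linearProjOfIsCompl_apply_right' hcompl (Submodule.mem_sup_left hc)
      simp only [y, LinearMap.comp_apply, map_add, h1, h2, map_zero, add_zero]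
      apply hzval
      show Nl ((e.symm ⟨w, hwR⟩ : K') : M) ∈ F
      rw [hNe ⟨w, hwR⟩]
      exact (Submodule.mem_inf.1 hw).2
    · ext x
      have hNx : Nl x ∈ R0 := LinearMap.mem_range_self _ _
      have h1 : πR (Nl x) = ⟨Nl x, hNx⟩ :=
        Submodule.linearProjOfIsCompl_apply_left hcompl ⟨Nl x, hNx⟩
      simp only [LinearMap.dualMap_apply', y, LinearMap.comp_apply, h1]
      have hker : Nl (x - ((e.symm ⟨Nl x, hNx⟩ : K') : M)) = 0 := by
        rw [map_sub, hNe ⟨Nl x, hNx⟩, sub_self]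
      have := hzval (x - ((e.symm ⟨Nl x, hNx⟩ : K') : M)) (by rw [hker]; exact F.zero_mem)
      rw [map_sub, sub_eq_zero] at this
      exact this.symm

end Duality2


open Fin.NatCast in
lemma aux_ideal {E : Type*} [Field E] {f : ℕ} [NeZero f]
    (σ : (Fin f → E) ≃+* (Fin f → E))
    (hσ : ∀ (x : Fin f → E) (i : Fin f), σ x i = x (i + 1))
    (J : Submodule (Fin f → E) (Fin f → E))
    (hstab : ∀ a ∈ J, σ a ∈ J)
    (a : Fin f → E) (haJ : a ∈ J) (j : Fin f) (haj : a j ≠ 0) :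
    (1 : Fin f → E) ∈ J := by
  have happly : ∀ (m : ℕ) (b : Fin f → E) (i : Fin f), (⇑σ)^[m] b i = b (i + (m : Fin f)) := by
    intro m
    induction m with
    | zero => intro b i; simp
    | succ m ih =>
      intro b i
      rw [Function.iterate_succ_apply, ih (σ b) i, hσ]
      congr 1
      rw [Nat.cast_add_one]
      rw [add_assoc]
  have hiter : ∀ (m : ℕ) (b : Fin f → E), b ∈ J → (⇑σ)^[m] b ∈ J := by
    intro m
    induction m with
    | zero => intro b hb; simpa using hb
    | succ m ih =>
      intro b hb
      rw [Function.iterate_succ_apply]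
      exact ih _ (hstab b hb)
  have hsingle : ∀ i : Fin f, Pi.single i (1 : E) ∈ J := by
    intro i
    set m := (j - i).val with hm
    set b := (⇑σ)^[m] a with hb
    have hbJ : b ∈ J := hiter m a haJ
    have hbi : b i = a j := by
      rw [hb, happly m a i, hm, Fin.cast_val_eq_self, add_sub_cancel]
    have key : Pi.single i (1 : E) = (Pi.single i ((a j)⁻¹)) * b := by
      funext k
      by_cases hk : k = i
      · subst hk
        simp [hbi, inv_mul_cancel₀ haj]
      · simp [Pi.single_eq_of_ne hk]
    rw [key, ← smul_eq_mul]
    exact J.smul_mem _ hbJ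
  have h1 : (1 : Fin f → E) = ∑ i : Fin f, Pi.single i (1 : E) := by
    funext k
    rw [Finset.sum_apply]
    rw [Finset.sum_eq_single k]
    · simp
    · intro b _ hb; exact Pi.single_eq_of_ne (Ne.symm hb) _
    · intro h; exact absurd (Finset.mem_univ k) h
  rw [h1]
  exact Submodule.sum_mem J fun i _ => hsingle i

section Engine
variable {E : Type*} [Field E] {f : ℕ} [NeZero f]

lemma aux_engine (σ : (Fin f → E) ≃+* (Fin f → E))
    (hσ : ∀ (x : Fin f → E) (i : Fin f), σ x i = x (i + 1))
    {D : Type*} [AddCommGroup D] [Module (Fin f → E) D]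
    (X : Submodule (Fin f → E) D) (w : D)
    (hshift : ∀ a : Fin f → E, a • w ∈ X → σ a • w ∈ X)
    (a : Fin f → E) (ha : a ≠ 0) (haX : a • w ∈ X) : w ∈ X := by
  obtain ⟨j, hj⟩ := Function.ne_iff.1 ha
  have h1 := aux_ideal σ hσ
    (Submodule.comap (LinearMap.toSpanSingleton (Fin f → E) D w) X)
    (fun b hb => by
      rw [Submodule.mem_comap, LinearMap.toSpanSingleton_apply] at hb ⊢
      exact hshift b hb)
    a (by rwa [Submodule.mem_comap, LinearMap.toSpanSingleton_apply]) j hj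
  rw [Submodule.mem_comap, LinearMap.toSpanSingleton_apply, one_smul] at h1
  exact h1


end Engine

lemma aux_core
    {E : Type*} [Field E] [CharZero E] (p : ℕ) (hp : p.Prime)
    {f : ℕ} [NeZero f]
    (σ : (Fin f → E) ≃+* (Fin f → E))
    (hσ : ∀ (x : Fin f → E) (i : Fin f), σ x i = x (i + 1))
    {D : Type*} [AddCommGroup D] [Module (Fin f → E) D]
    [Module.Finite (Fin f → E) D]
    (φ : D ≃+ D)
    (hφ : ∀ (a : Fin f → E) (x : D), φ (a • x) = σ a • φ x)
    (N : D →ₗ[Fin f → E] D)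
    (hNφ : ∀ x : D, N (φ x) = p • φ (N x))
    (n : ℕ) (𝓕 : ℕ → Submodule (Fin f → E) D)
    (h𝓕0 : 𝓕 0 = ⊥) (h𝓕n : 𝓕 n = ⊤)
    (hmono : ∀ k, k < n → 𝓕 k ≤ 𝓕 (k + 1))
    (hφstab : ∀ k, k ≤ n → ∀ x ∈ 𝓕 k, φ x ∈ 𝓕 k)
    (hrank1 : ∀ k, 1 ≤ k → k ≤ n →
      Nonempty ((𝓕 k ⧸ (𝓕 (k - 1)).comap (𝓕 k).subtype) ≃ₗ[Fin f → E] (Fin f → E)))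
    (s t : ℕ) (hs1 : 1 ≤ s) (hsn : s ≤ n) (ht1 : 1 ≤ t) (htn : t ≤ n) :
    (Submodule.map N (𝓕 (t - 1)) < Submodule.map N (𝓕 t) ∧
      Submodule.map N (𝓕 t) ≤ Submodule.map N (𝓕 (t - 1)) ⊔ 𝓕 s ∧
      ∀ j, 1 ≤ j → j ≤ n →
        Submodule.map N (𝓕 t) ≤ Submodule.map N (𝓕 (t - 1)) ⊔ 𝓕 j → s ≤ j)
    ↔ (Submodule.comap N (𝓕 (s - 1)) < Submodule.comap N (𝓕 s) ∧
      Submodule.comap N (𝓕 s) ⊓ 𝓕 (t - 1) ≤ Submodule.comap N (𝓕 (s - 1)) ∧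
      ∀ c, c ≤ n - 1 →
        Submodule.comap N (𝓕 s) ⊓ 𝓕 c ≤ Submodule.comap N (𝓕 (s - 1)) → c ≤ t - 1) := by
  set A := Fin f → E with hA
  have hp0 : (p : E) ≠ 0 := Nat.cast_ne_zero.2 hp.ne_zero
  -- E-module structure on D
  letI instE : Module E D := Module.compHom D (algebraMap E A)
  haveI instTower : IsScalarTower E A D :=
    ⟨fun e a x => by
      show (e • a) • x = algebraMap E A e • (a • x)
      rw [Algebra.smul_def, mul_smul]⟩
  haveI finED : Module.Finite E D := Module.Finite.trans A D
  have hsmulE : ∀ (e : E) (x : D), e • x = (algebraMap E A e) • x := fun _ _ => rfl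
  have hσalg : ∀ e : E, σ (algebraMap E A e) = algebraMap E A e := by
    intro e
    funext i
    rw [hσ]
    rfl
  let φE : D ≃ₗ[E] D :=
    { toFun := φ
      invFun := φ.symm
      left_inv := φ.left_inv
      right_inv := φ.right_inv
      map_add' := fun a b => map_add φ a b
      map_smul' := fun e x => by
        show φ (e • x) = e • φ x
        rw [hsmulE, hφ, hσalg, ← hsmulE] }
  -- monotonicity
  have hmono' : ∀ a b, a ≤ b → b ≤ n → 𝓕 a ≤ 𝓕 b := by
    intro a b hab hbn
    induction b with
    | zero => have : a = 0 := by omega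
              subst this; exact le_refl _
    | succ b ih =>
      rcases Nat.lt_or_ge a (b + 1) with h | h
      · exact le_trans (ih (by omega) (by omega)) (hmono b (by omega))
      · have : a = b + 1 := by omega
        subst this; exact le_refl _
  -- stability upgrade
  have hstabiff : ∀ U : Submodule A D, (∀ x ∈ U, φ x ∈ U) → ∀ x : D, (x ∈ U ↔ φ x ∈ U) := by
    intro U hU x
    have hle : Submodule.map (φE : D →ₗ[E] D) (U.restrictScalars E) ≤ U.restrictScalars E := by
      rintro _ ⟨u, hu, rfl⟩
      exact hU u hu
    have heq : Submodule.map (φE : D →ₗ[E] D) (U.restrictScalars E) = U.restrictScalars E := by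
      apply Submodule.eq_of_le_of_finrank_le hle
      rw [LinearEquiv.finrank_map_eq φE]
    constructor
    · exact fun hx => hU x hx
    · intro hx
      have : φ x ∈ Submodule.map (φE : D →ₗ[E] D) (U.restrictScalars E) := heq.symm ▸ hx
      obtain ⟨u, hu, hux⟩ := this
      have : u = x := φ.injective hux
      subst this; exact hu
  -- φ stability of map N (𝓕 k)
  have hstabN : ∀ k, k ≤ n → ∀ y ∈ Submodule.map N (𝓕 k), φ y ∈ Submodule.map N (𝓕 k) := by
    rintro k hk _ ⟨x, hx, rfl⟩
    have h1 : (p : E) • φ (N x) = N (φ x) := by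
      rw [hNφ x, Nat.cast_smul_eq_nsmul]
    have h2 : φ (N x) = (p : E)⁻¹ • N (φ x) := by
      rw [← h1, inv_smul_smul₀ hp0]
    rw [h2, hsmulE]
    exact Submodule.smul_mem _ _ ⟨φ x, hφstab k hk x hx, rfl⟩
  -- generators
  have hgen : ∀ k, 1 ≤ k → k ≤ n → ∃ v : D, v ∈ 𝓕 k ∧
      (∀ x ∈ 𝓕 k, ∃ a : A, x - a • v ∈ 𝓕 (k - 1)) ∧
      (∀ a : A, a • v ∈ 𝓕 (k - 1) → a = 0) := by
    intro k hk1 hkn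
    obtain ⟨iso⟩ := hrank1 k hk1 hkn
    obtain ⟨vb, hvb⟩ := Submodule.Quotient.mk_surjective _ (iso.symm 1)
    refine ⟨(vb : D), vb.2, ?_, ?_⟩
    · intro x hx
      refine ⟨iso (Submodule.Quotient.mk ⟨x, hx⟩), ?_⟩
      have hmem : (⟨x, hx⟩ - iso (Submodule.Quotient.mk ⟨x, hx⟩) • vb : 𝓕 k) ∈
          (𝓕 (k - 1)).comap (𝓕 k).subtype := by
        rw [← Submodule.Quotient.mk_eq_zero]
        have : Submodule.Quotient.mk (p := (𝓕 (k - 1)).comap (𝓕 k).subtype)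
            (⟨x, hx⟩ - iso (Submodule.Quotient.mk ⟨x, hx⟩) • vb)
            = Submodule.Quotient.mk ⟨x, hx⟩
              - iso (Submodule.Quotient.mk ⟨x, hx⟩) • Submodule.Quotient.mk vb := by
          rw [Submodule.Quotient.mk_sub, Submodule.Quotient.mk_smul]
        rw [this, hvb]
        apply iso.injective
        rw [map_sub, map_smul, map_zero, LinearEquiv.apply_symm_apply, smul_eq_mul, mul_one,
          sub_self]
      simpa using hmem
    · intro a ha
      have hmem : (a • vb : 𝓕 k) ∈ (𝓕 (k - 1)).comap (𝓕 k).subtype := by simpa using ha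
      rw [← Submodule.Quotient.mk_eq_zero] at hmem
      have : (0 : A) = a := by
        calc (0 : A) = iso 0 := (map_zero iso).symm
        _ = iso (Submodule.Quotient.mk (a • vb)) := by rw [← hmem]
        _ = a • iso (Submodule.Quotient.mk vb) := by rw [Submodule.Quotient.mk_smul, map_smul]
        _ = a := by rw [hvb, LinearEquiv.apply_symm_apply, smul_eq_mul, mul_one]
      exact this.symm
  -- unit lemma
  have hunit : ∀ k, 1 ≤ k → k ≤ n → ∀ v : D, v ∈ 𝓕 k →
      (∀ x ∈ 𝓕 k, ∃ a : A, x - a • v ∈ 𝓕 (k - 1)) →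
      (∀ a : A, a • v ∈ 𝓕 (k - 1) → a = 0) →
      ∃ b : A, IsUnit b ∧ φ v - b • v ∈ 𝓕 (k - 1) := by
    intro k hk1 hkn v hv hrep hcoef
    obtain ⟨b, hb⟩ := hrep (φ v) (hφstab k hkn v hv)
    refine ⟨b, ?_, hb⟩
    set x₀ := φ.symm v with hx₀
    have hφx₀ : φ x₀ = v := φ.apply_symm_apply v
    have hx₀mem : x₀ ∈ 𝓕 k := by
      rw [hstabiff (𝓕 k) (hφstab k hkn) x₀, hφx₀]
      exact hv
    obtain ⟨c, hc⟩ := hrep x₀ hx₀mem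
    have key : (1 - σ c * b) • v ∈ 𝓕 (k - 1) := by
      have h1 : φ (x₀ - c • v) ∈ 𝓕 (k - 1) := hφstab (k - 1) (by omega) _ hc
      have h2 : σ c • (φ v - b • v) ∈ 𝓕 (k - 1) := Submodule.smul_mem _ _ hb
      have h3 : (1 - σ c * b) • v = φ (x₀ - c • v) + σ c • (φ v - b • v) := by
        rw [map_sub, hφx₀, hφ]
        rw [sub_smul, one_smul, smul_sub, smul_smul]
        abel
      rw [h3]
      exact Submodule.add_mem _ h1 h2
    have hzero : 1 - σ c * b = 0 := hcoef _ key
    have : σ c * b = 1 := by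
      have := sub_eq_zero.1 hzero
      exact this.symm
    exact IsUnit.of_mul_eq_one (σ c) (by rw [mul_comm]; exact this)
    -- ==================== main equivalence ====================
  constructor
  · -- forward
    rintro ⟨hPstrict, hPs, hPmin⟩
    obtain ⟨v, hvF, hvrep, hvcoef⟩ := hgen t ht1 htn
    have hmapNle : ∀ X : Submodule A D, Submodule.map N (𝓕 (t - 1)) ≤ X → N v ∈ X →
        Submodule.map N (𝓕 t) ≤ X := by
      rintro X hX1 hX2 _ ⟨x, hx, rfl⟩
      obtain ⟨a, hxa⟩ := hvrep x hx
      have h1 : N (x - a • v) ∈ X := hX1 ⟨x - a • v, hxa, rfl⟩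
      have h2 : N x = N (x - a • v) + a • N v := by
        rw [map_sub, map_smul]; abel
      rw [h2]
      exact X.add_mem h1 (X.smul_mem a hX2)
    set Y := Submodule.map N (𝓕 (t - 1)) ⊔ 𝓕 (s - 1) with hYdef
    have hNvY : N v ∉ Y := by
      intro hmem
      have hle : Submodule.map N (𝓕 t) ≤ Y := hmapNle Y le_sup_left hmem
      by_cases hs : s = 1
      · rw [hYdef, hs] at hle
        simp only [Nat.sub_self, h𝓕0, sup_bot_eq] at hle
        exact absurd hle hPstrict.not_ge
      · have := hPmin (s - 1) (by omega) (by omega) hle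
        omega
    have hNvFt : N v ∈ Submodule.map N (𝓕 t) := ⟨v, hvF, rfl⟩
    obtain ⟨m, hm, g, hg, hmg⟩ := Submodule.mem_sup.1 (hPs hNvFt)
    obtain ⟨u₀, hu₀, rfl⟩ := hm
    have hgY : g ∉ 𝓕 (s - 1) := by
      intro hgmem
      exact hNvY (by rw [← hmg]
                     exact Submodule.add_mem _
                       (Submodule.mem_sup_left ⟨u₀, hu₀, rfl⟩)
                       (Submodule.mem_sup_right hgmem))
    have hNx : N (v - u₀) = g := by
      rw [map_sub, ← hmg]; abel
    have hxs : v - u₀ ∈ Submodule.comap N (𝓕 s) := by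
      rw [Submodule.mem_comap, hNx]; exact hg
    have hxs1 : v - u₀ ∉ Submodule.comap N (𝓕 (s - 1)) := by
      rw [Submodule.mem_comap, hNx]; exact hgY
    have hxFt : v - u₀ ∈ 𝓕 t :=
      Submodule.sub_mem _ hvF (hmono' (t - 1) t (by omega) htn hu₀)
    refine ⟨?_, ?_, ?_⟩
    · rw [SetLike.lt_iff_le_and_exists]
      exact ⟨Submodule.comap_mono (hmono' (s - 1) s (by omega) hsn), v - u₀, hxs, hxs1⟩
    · by_contra hcon
      obtain ⟨w₀, hw₀mem, hw₀not⟩ := SetLike.not_le_iff_exists.1 hcon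
      have hw₀1 : w₀ ∈ Submodule.comap N (𝓕 s) := (Submodule.mem_inf.1 hw₀mem).1
      have hw₀2 : w₀ ∈ 𝓕 (t - 1) := (Submodule.mem_inf.1 hw₀mem).2
      obtain ⟨u, huF, hurep, hucoef⟩ := hgen s hs1 hsn
      obtain ⟨b', hb'unit, hb'⟩ := hunit s hs1 hsn u huF hurep hucoef
      set W := Submodule.map N (𝓕 (t - 1)) ⊓ 𝓕 s with hWdef
      set X' := W ⊔ 𝓕 (s - 1) with hX'def
      have hX'stab : ∀ y ∈ X', φ y ∈ X' := by
        intro y hy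
        obtain ⟨y1, hy1, y2, hy2, rfl⟩ := Submodule.mem_sup.1 hy
        rw [map_add]
        refine Submodule.add_mem _ (Submodule.mem_sup_left ?_) (Submodule.mem_sup_right ?_)
        · exact Submodule.mem_inf.2 ⟨hstabN (t - 1) (by omega) _ (Submodule.mem_inf.1 hy1).1,
            hφstab s hsn _ (Submodule.mem_inf.1 hy1).2⟩
        · exact hφstab (s - 1) (by omega) _ hy2
      have hX'iff := hstabiff X' hX'stab
      obtain ⟨a, haw⟩ := hurep (N w₀) (Submodule.mem_comap.1 hw₀1)
      have ha0 : a ≠ 0 := by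
        intro h0
        apply hw₀not
        rw [Submodule.mem_comap]
        simpa [h0] using haw
      have haX : a • u ∈ X' := by
        have h1 : N w₀ ∈ W := Submodule.mem_inf.2 ⟨⟨w₀, hw₀2, rfl⟩, Submodule.mem_comap.1 hw₀1⟩
        have h2 : a • u = N w₀ - (N w₀ - a • u) := by abel
        rw [h2]
        exact X'.sub_mem (Submodule.mem_sup_left h1) (Submodule.mem_sup_right haw)
      have hshift : ∀ c : A, c • u ∈ X' → σ c • u ∈ X' := by
        intro c hc
        have h1 : φ (c • u) ∈ X' := (hX'iff _).1 hc
        rw [hφ] at h1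
        have h3 : (σ c * b') • u = σ c • φ u - σ c • (φ u - b' • u) := by
          rw [smul_sub, smul_smul]; abel
        have h4 : σ c • (φ u - b' • u) ∈ X' :=
          Submodule.mem_sup_right (Submodule.smul_mem _ _ hb')
        have h5 : (σ c * b') • u ∈ X' := by rw [h3]; exact X'.sub_mem h1 h4
        obtain ⟨bu, hbu⟩ := hb'unit
        have h6 : σ c • u = (↑bu⁻¹ : A) • ((σ c * b') • u) := by
          rw [smul_smul, ← hbu, mul_comm (σ c), ← mul_assoc, Units.inv_mul, one_mul]
        rw [h6]
        exact Submodule.smul_mem _ _ h5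
      have huX' : u ∈ X' := aux_engine σ hσ X' u hshift a ha0 haX
      have hFsle : 𝓕 s ≤ Submodule.map N (𝓕 (t - 1)) ⊔ 𝓕 (s - 1) := by
        intro y hy
        obtain ⟨c, hyc⟩ := hurep y hy
        have h1 : y = (y - c • u) + c • u := by abel
        have h3 : X' ≤ Submodule.map N (𝓕 (t - 1)) ⊔ 𝓕 (s - 1) :=
          sup_le (le_trans inf_le_left le_sup_left) le_sup_right
        rw [h1]
        exact Submodule.add_mem _ (Submodule.mem_sup_right hyc) (h3 (X'.smul_mem c huX'))
      exact hNvY (by rw [← hmg]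
                     exact Submodule.add_mem _
                       (Submodule.mem_sup_left ⟨u₀, hu₀, rfl⟩) (hFsle hg))
    · intro c hc hDQc
      by_contra hct
      have hct' : t ≤ c := by omega
      have hmemc : v - u₀ ∈ Submodule.comap N (𝓕 s) ⊓ 𝓕 c :=
        Submodule.mem_inf.2 ⟨hxs, hmono' t c hct' (by omega) hxFt⟩
      exact hxs1 (hDQc hmemc)
  · -- backward
    rintro ⟨hDstrict, hDQ, hDmin⟩
    obtain ⟨v, hvF, hvrep, hvcoef⟩ := hgen t ht1 htn
    obtain ⟨b, hbunit, hb⟩ := hunit t ht1 htn v hvF hvrep hvcoef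
    have hz : ∃ z, z ∈ 𝓕 t ∧ N z ∈ 𝓕 s ∧ N z ∉ 𝓕 (s - 1) := by
      by_cases hteq : t = n
      · obtain ⟨zz, hz1, hz2⟩ := SetLike.exists_of_lt hDstrict
        exact ⟨zz, by rw [hteq, h𝓕n]; trivial, Submodule.mem_comap.1 hz1,
          fun h => hz2 (Submodule.mem_comap.2 h)⟩
      · have ht' : t ≤ n - 1 := by omega
        have hnot : ¬ (Submodule.comap N (𝓕 s) ⊓ 𝓕 t ≤ Submodule.comap N (𝓕 (s - 1))) := by
          intro hle
          have := hDmin t ht' hle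
          omega
        obtain ⟨z, hz1, hz2⟩ := SetLike.not_le_iff_exists.1 hnot
        exact ⟨z, (Submodule.mem_inf.1 hz1).2,
          Submodule.mem_comap.1 (Submodule.mem_inf.1 hz1).1,
          fun h => hz2 (Submodule.mem_comap.2 h)⟩
    obtain ⟨z, hzt, hzs, hzs1⟩ := hz
    have hznot : z ∉ 𝓕 (t - 1) := fun hmem =>
      hzs1 (Submodule.mem_comap.1 (hDQ (Submodule.mem_inf.2 ⟨Submodule.mem_comap.2 hzs, hmem⟩)))
    obtain ⟨a, haz⟩ := hvrep z hzt
    have ha0 : a ≠ 0 := fun h0 => hznot (by simpa [h0] using haz)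
    refine ⟨?_, ?_, ?_⟩
    · rw [SetLike.lt_iff_le_and_exists]
      refine ⟨Submodule.map_mono (hmono' (t - 1) t (by omega) htn), N z, ⟨z, hzt, rfl⟩, ?_⟩
      rintro ⟨u, hu, huz⟩
      have hmemu : u ∈ Submodule.comap N (𝓕 s) ⊓ 𝓕 (t - 1) :=
        Submodule.mem_inf.2 ⟨by rw [Submodule.mem_comap, huz]; exact hzs, hu⟩
      exact hzs1 (by rw [← huz]; exact Submodule.mem_comap.1 (hDQ hmemu))
    · set X := Submodule.map N (𝓕 (t - 1)) ⊔ 𝓕 s with hXdef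
      have hXstab : ∀ y ∈ X, φ y ∈ X := by
        intro y hy
        obtain ⟨y1, hy1, y2, hy2, rfl⟩ := Submodule.mem_sup.1 hy
        rw [map_add]
        exact Submodule.add_mem _
          (Submodule.mem_sup_left (hstabN (t - 1) (by omega) _ hy1))
          (Submodule.mem_sup_right (hφstab s hsn _ hy2))
      have hXiff := hstabiff X hXstab
      have haX : a • N v ∈ X := by
        have h1 : N z ∈ X := Submodule.mem_sup_right hzs
        have h2 : N (z - a • v) ∈ X := Submodule.mem_sup_left ⟨z - a • v, haz, rfl⟩
        have h3 : a • N v = N z - N (z - a • v) := by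
          rw [map_sub, map_smul]; abel
        rw [h3]
        exact X.sub_mem h1 h2
      have hshift : ∀ c : A, c • N v ∈ X → σ c • N v ∈ X := by
        intro c hc
        have h1 : φ (c • N v) ∈ X := (hXiff _).1 hc
        rw [hφ] at h1
        have h2 : (p : E) • (σ c • φ (N v)) ∈ X := by
          rw [hsmulE]
          exact X.smul_mem _ h1
        have h3 : (p : E) • (σ c • φ (N v)) = σ c • ((p : E) • φ (N v)) := smul_comm _ _ _
        have h4 : (p : E) • φ (N v) = N (φ v) := by
          rw [hNφ v, Nat.cast_smul_eq_nsmul]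
        have h5 : σ c • N (φ v) ∈ X := by
          rw [← h4, ← h3]; exact h2
        have h6 : (σ c * b) • N v = σ c • N (φ v) - N (σ c • (φ v - b • v)) := by
          rw [map_smul, map_sub, map_smul, smul_sub, smul_smul]; abel
        have h7 : N (σ c • (φ v - b • v)) ∈ X :=
          Submodule.mem_sup_left ⟨σ c • (φ v - b • v), Submodule.smul_mem _ _ hb, rfl⟩
        have h8 : (σ c * b) • N v ∈ X := by rw [h6]; exact X.sub_mem h5 h7
        obtain ⟨bu, hbu⟩ := hbunit
        have h9 : σ c • N v = (↑bu⁻¹ : A) • ((σ c * b) • N v) := by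
          rw [smul_smul, ← hbu, mul_comm (σ c), ← mul_assoc, Units.inv_mul, one_mul]
        rw [h9]
        exact X.smul_mem _ h8
      have hNvX : N v ∈ X := aux_engine σ hσ X (N v) hshift a ha0 haX
      rintro _ ⟨x, hx, rfl⟩
      obtain ⟨c, hxc⟩ := hvrep x hx
      have h2 : N x = N (x - c • v) + c • N v := by
        rw [map_sub, map_smul]; abel
      rw [h2]
      exact X.add_mem (Submodule.mem_sup_left ⟨x - c • v, hxc, rfl⟩) (X.smul_mem c hNvX)
    · intro j hj1 hjn hPj
      by_contra hjs
      have hjs' : j ≤ s - 1 := by omega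
      have hPs1 : Submodule.map N (𝓕 t) ≤ Submodule.map N (𝓕 (t - 1)) ⊔ 𝓕 (s - 1) :=
        le_trans hPj (sup_le_sup_left (hmono' j (s - 1) hjs' (by omega)) _)
      have hNz : N z ∈ Submodule.map N (𝓕 t) := ⟨z, hzt, rfl⟩
      obtain ⟨m, hm, h, hh, hmh⟩ := Submodule.mem_sup.1 (hPs1 hNz)
      obtain ⟨u, hu, rfl⟩ := hm
      have hNu : N u ∈ 𝓕 s := by
        have h2 : N u = N z - h := by rw [← hmh]; abel
        rw [h2]
        exact Submodule.sub_mem _ hzs (hmono' (s - 1) s (by omega) hsn hh)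
      have hu1 := hDQ (Submodule.mem_inf.2 ⟨Submodule.mem_comap.2 hNu, hu⟩)
      apply hzs1
      rw [← hmh]
      exact Submodule.add_mem _ (Submodule.mem_comap.1 hu1) hh

/-- A pair `(s, t)` is a *marked pair* for a monodromy operator `N'` and a chain
`K` of submodules (of length `n`) if `N'(K_{t-1})` is strictly contained in
`N'(K_t)` and `s` is the least index `j ∈ {1,…,n}` such that
`N'(K_t) ⊆ N'(K_{t-1}) + K_j`. -/
def IsMarkedPair {A : Type*} [CommRing A] {D : Type*} [AddCommGroup D] [Module A D]
    (n : ℕ) (N' : D →ₗ[A] D) (K : ℕ → Submodule A D) (s t : ℕ) : Prop :=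
  Submodule.map N' (K (t - 1)) < Submodule.map N' (K t) ∧
  1 ≤ s ∧ s ≤ n ∧
  Submodule.map N' (K t) ≤ Submodule.map N' (K (t - 1)) ⊔ K s ∧
  ∀ j, 1 ≤ j → j ≤ n →
    Submodule.map N' (K t) ≤ Submodule.map N' (K (t - 1)) ⊔ K j → s ≤ j

/-- Let `(D, φ, N)` be an `E`-`(φ,N)`-module over `A = (Fin f → E)` (with `σ` the
cyclic shift automorphism of `A`) equipped with a refinement `𝓕` of length `n`.
Let `D* = Hom_A(D, A)` be the dual module, `N_{D*} = -(· ∘ N)` the negative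
transpose of `N`, and `𝓕̌ᵢ = {y ∈ D* : y(x) = 0 ∀ x ∈ 𝓕_{n-i}}` the dual
refinement. Then for `s, t ∈ {1,…,n}`, the pair `(s,t)` is a marked pair for
`(N, 𝓕)` if and only if `(n+1-t, n+1-s)` is a marked pair for `(N_{D*}, 𝓕̌)`. -/
theorem marked_pair_duality
    {E : Type*} [Field E] [CharZero E] (p : ℕ) (hp : p.Prime)
    (f : ℕ) [NeZero f] (hf : 1 ≤ f)
    (σ : (Fin f → E) ≃+* (Fin f → E))
    (hσ : ∀ (x : Fin f → E) (i : Fin f), σ x i = x (i + 1))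
    (D : Type*) [AddCommGroup D] [Module (Fin f → E) D]
    [Module.Finite (Fin f → E) D] [Module.Free (Fin f → E) D]
    (φ : D ≃+ D)
    (hφ : ∀ (a : Fin f → E) (x : D), φ (a • x) = σ a • φ x)
    (N : D →ₗ[Fin f → E] D)
    (hNφ : ∀ x : D, N (φ x) = p • φ (N x))
    (n : ℕ) (𝓕 : ℕ → Submodule (Fin f → E) D)
    (h𝓕0 : 𝓕 0 = ⊥) (h𝓕n : 𝓕 n = ⊤)
    (hmono : ∀ k, k < n → 𝓕 k ≤ 𝓕 (k + 1))
    (hφstab : ∀ k, k ≤ n → ∀ x ∈ 𝓕 k, φ x ∈ 𝓕 k)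
    (hNstab : ∀ k, k ≤ n → ∀ x ∈ 𝓕 k, N x ∈ 𝓕 k)
    (hrank1 : ∀ k, 1 ≤ k → k ≤ n →
      Nonempty ((𝓕 k ⧸ (𝓕 (k - 1)).comap (𝓕 k).subtype) ≃ₗ[Fin f → E] (Fin f → E)))
    (s t : ℕ) (hs1 : 1 ≤ s) (hsn : s ≤ n) (ht1 : 1 ≤ t) (htn : t ≤ n) :
    IsMarkedPair n N 𝓕 s t ↔
      IsMarkedPair n (-(LinearMap.dualMap N))
        (fun k => (𝓕 (n - k)).dualAnnihilator) (n + 1 - t) (n + 1 - s) := by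
  have hmapdual : ∀ k, Submodule.map (-(N.dualMap)) ((𝓕 k).dualAnnihilator)
      = (Submodule.comap N (𝓕 k)).dualAnnihilator := fun k => by
    rw [Submodule.map_neg, aux_map_dualMap]
  have hcore := aux_core p hp σ hσ φ hφ N hNφ n 𝓕 h𝓕0 h𝓕n hmono hφstab hrank1
    s t hs1 hsn ht1 htn
  have ei1 : n - (n + 1 - s - 1) = s := by omega
  have ei2 : n - (n + 1 - s) = s - 1 := by omega
  have ei3 : n - (n + 1 - t) = t - 1 := by omega
  constructor
  · rintro ⟨h1, -, -, h4, h5⟩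
    obtain ⟨d1, d2, d3⟩ := hcore.1 ⟨h1, h4, h5⟩
    refine ⟨?_, by omega, by omega, ?_, ?_⟩
    · show Submodule.map (-(N.dualMap)) ((𝓕 (n - (n + 1 - s - 1))).dualAnnihilator)
        < Submodule.map (-(N.dualMap)) ((𝓕 (n - (n + 1 - s))).dualAnnihilator)
      rw [ei1, ei2, hmapdual, hmapdual, aux_dualAnn_lt_iff]
      exact d1
    · show Submodule.map (-(N.dualMap)) ((𝓕 (n - (n + 1 - s))).dualAnnihilator)
        ≤ Submodule.map (-(N.dualMap)) ((𝓕 (n - (n + 1 - s - 1))).dualAnnihilator)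
          ⊔ (𝓕 (n - (n + 1 - t))).dualAnnihilator
      rw [ei1, ei2, ei3, hmapdual, hmapdual, aux_dualAnn_le_sup_iff]
      exact d2
    · intro j hj1 hjn hle
      have hh : Submodule.map (-(N.dualMap)) ((𝓕 (s - 1)).dualAnnihilator)
          ≤ Submodule.map (-(N.dualMap)) ((𝓕 s).dualAnnihilator)
            ⊔ (𝓕 (n - j)).dualAnnihilator := by
        have h := hle
        beta_reduce at h
        rw [ei1, ei2] at h
        exact h
      rw [hmapdual, hmapdual, aux_dualAnn_le_sup_iff] at hh
      have := d3 (n - j) (by omega) hh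
      omega
  · rintro ⟨h1, -, -, h4, h5⟩
    beta_reduce at h1 h4
    rw [ei1, ei2] at h1 h4
    rw [ei3] at h4
    rw [hmapdual, hmapdual, aux_dualAnn_lt_iff] at h1
    rw [hmapdual, hmapdual, aux_dualAnn_le_sup_iff] at h4
    have hDmin : ∀ c, c ≤ n - 1 →
        Submodule.comap N (𝓕 s) ⊓ 𝓕 c ≤ Submodule.comap N (𝓕 (s - 1)) → c ≤ t - 1 := by
      intro c hc hDQc
      have hj := h5 (n - c) (by omega) (by omega) ?_
      · omega
      · show Submodule.map (-(N.dualMap)) ((𝓕 (n - (n + 1 - s))).dualAnnihilator)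
          ≤ Submodule.map (-(N.dualMap)) ((𝓕 (n - (n + 1 - s - 1))).dualAnnihilator)
            ⊔ (𝓕 (n - (n - c))).dualAnnihilator
        rw [ei1, ei2, show n - (n - c) = c from by omega, hmapdual, hmapdual,
          aux_dualAnn_le_sup_iff]
        exact hDQc
    obtain ⟨c1, c2, c3⟩ := hcore.2 ⟨h1, h4, hDmin⟩
    exact ⟨c1, hs1, hsn, c2, c3⟩
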